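/- arXiv:0907.1520 — 2 statements merged into one kernel-verified Lean document; each statement's English description precedes it below -/
import Mathlib

section
/- In any idempotent right quasigroup (X, *, \), for all x, u, v, w in X the generalized associativity relation u +^x (v +^{x*u} w) = (u +^x v) +^x w holds, where +^{x*u} denotes the sum operation based at the point x * u. -/
/-!
Left multiplication by `x` is injective and turns `+^x` into the product:
`x * (u +^x v) = (x * u) * v`. Applied twice to each side, both become `((x * u) * v) * w`.
-/

/-- An idempotent right quasigroup (irq): a set with operations `*` (mul) and `\` (div)
satisfying (P1) `x * (x \ y) = x \ (x * y) = y` and (P2) `x * x = x \ x = x`. -/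
structure IRQ (X : Type*) where
  mul : X → X → X
  div : X → X → X
  mul_div : ∀ x y, mul x (div x y) = y
  div_mul : ∀ x y, div x (mul x y) = y
  mul_self : ∀ x, mul x x = x
  div_self : ∀ x, div x x = x

namespace IRQ

variable {X : Type*}

/-- The difference operation based at `x`: `dif Q x u v = v -^x u = (x * u) \ (x * v)`. -/
def dif (Q : IRQ X) (x u v : X) : X := Q.div (Q.mul x u) (Q.mul x v)

/-- The sum operation based at `x`: `sum Q x u v = u +^x v = x \ ((x * u) * v)`. -/
def sum (Q : IRQ X) (x u v : X) : X := Q.div x (Q.mul (Q.mul x u) v)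

/-- The inverse operation based at `x`: `neg Q x u = -^x u = (x * u) \ x`. -/
def neg (Q : IRQ X) (x u : X) : X := Q.div (Q.mul x u) x

end IRQ

namespace IRQ

variable {X : Type*} (Q : IRQ X)

theorem mul_right_injective (x : X) : Function.Injective (Q.mul x) :=
  Function.LeftInverse.injective (Q.div_mul x)

theorem mul_sum (x u v : X) : Q.mul x (Q.sum x u v) = Q.mul (Q.mul x u) v :=
  Q.mul_div x _

end IRQ

/-- In any irq, the generalized associativity relation
`u +^x (v +^{x*u} w) = (u +^x v) +^x w`. -/
theorem irq_gen_assoc {X : Type*} (Q : IRQ X) (x u v w : X) :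
    Q.sum x u (Q.sum (Q.mul x u) v w) = Q.sum x (Q.sum x u v) w := by
  apply Q.mul_right_injective x
  rw [Q.mul_sum, Q.mul_sum, Q.mul_sum, Q.mul_sum]
end

section
/- In any distributive idempotent right quasigroup (X, *, \) and for any k ≥ 1, the difference and sum operations of (X, *_k, \_k) satisfy (xyz)_k = x *_k (y \_k z) and )xyz(_k = y *_k (x \_k z); consequently )xyz(_k = (yxz)_k for all x, y, z, i.e. the sum based at x of y and z equals the difference based at y of x and z. -/
namespace IRQ

variable {X : Type*}

/-- Iterated operation `x *_k u` for `k : ℕ` (with `x *_0 u = u`, `x *_{k+1} u = x * (x *_k u)`). -/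
def mulIter (Q : IRQ X) : ℕ → X → X → X
  | 0, _, u => u
  | n + 1, x, u => Q.mul x (Q.mulIter n x u)

/-- Iterated operation `x \_k u` for `k : ℕ`. -/
def divIter (Q : IRQ X) : ℕ → X → X → X
  | 0, _, u => u
  | n + 1, x, u => Q.div x (Q.divIter n x u)

end IRQ

namespace IRQ

variable {X : Type*}

/-- The difference operation of the irq `(X, *_k, \_k)` based at `x`:
`(xuv)_k = (x *_k u) \_k (x *_k v)`. -/
def difIter (Q : IRQ X) (k : ℕ) (x u v : X) : X :=
  Q.divIter k (Q.mulIter k x u) (Q.mulIter k x v)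

/-- The sum operation of the irq `(X, *_k, \_k)` based at `x`:
`)xuv(_k = x \_k ((x *_k u) *_k v)`. -/
def sumIter (Q : IRQ X) (k : ℕ) (x u v : X) : X :=
  Q.divIter k x (Q.mulIter k (Q.mulIter k x u) v)

end IRQ

/-! In a distributive irq every left translation `x * -` is an endomorphism of `(X, *)`; so is its
inverse `x \ -`, and `x * -` also preserves `\`. Endomorphisms pass to iterates and preserve the
iterated operations, so `x *_k -` commutes with `\_k` and `x \_k -` with `*_k`: the first gives
`(xyz)_k = x *_k (y \_k z)` at once, and the second turns `x \_k ((x *_k y) *_k z)` into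
`y *_k (x \_k z)`. -/

open Function

namespace IRQ

variable {X : Type*} (Q : IRQ X)

theorem mulIter_eq_iterate (k : ℕ) (x : X) : Q.mulIter k x = (Q.mul x)^[k] := by
  funext u
  induction k with
  | zero => rfl
  | succ k ih => rw [iterate_succ_apply', ← ih]; rfl

theorem divIter_eq_iterate (k : ℕ) (x : X) : Q.divIter k x = (Q.div x)^[k] := by
  funext u
  induction k with
  | zero => rfl
  | succ k ih => rw [iterate_succ_apply', ← ih]; rfl

theorem divIter_mulIter (k : ℕ) (x u : X) : Q.divIter k x (Q.mulIter k x u) = u := by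
  rw [mulIter_eq_iterate, divIter_eq_iterate]
  exact LeftInverse.iterate (Q.div_mul x) k u

variable {Q}

theorem semiconj₂_mulIter {f : X → X} (hf : Semiconj₂ f Q.mul Q.mul) (n : ℕ) :
    Semiconj₂ f (Q.mulIter n) (Q.mulIter n) := by
  intro u v
  induction n with
  | zero => rfl
  | succ n ih => simp only [mulIter, hf.eq, ih]

theorem semiconj₂_divIter {f : X → X} (hf : Semiconj₂ f Q.div Q.div) (n : ℕ) :
    Semiconj₂ f (Q.divIter n) (Q.divIter n) := by
  intro u v
  induction n with
  | zero => rfl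
  | succ n ih => simp only [divIter, hf.eq, ih]

section Distrib

variable (hd : ∀ x, Semiconj₂ (Q.mul x) Q.mul Q.mul)
include hd

theorem semiconj₂_mul_div (x : X) : Semiconj₂ (Q.mul x) Q.div Q.div := by
  intro u v
  have h : Q.mul (Q.mul x u) (Q.mul x (Q.div u v)) = Q.mul x v := by
    rw [← hd x, Q.mul_div]
  rw [← h, Q.div_mul]

theorem semiconj₂_div_mul (x : X) : Semiconj₂ (Q.div x) Q.mul Q.mul := by
  intro u v
  conv_lhs => rw [← Q.mul_div x u, ← Q.mul_div x v, ← hd x, Q.div_mul]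

theorem semiconj₂_mulIter_divIter (k : ℕ) (x : X) (n : ℕ) :
    Semiconj₂ (Q.mulIter k x) (Q.divIter n) (Q.divIter n) := by
  rw [mulIter_eq_iterate]
  exact semiconj₂_divIter ((semiconj₂_mul_div hd x).iterate k) n

theorem semiconj₂_divIter_mulIter (k : ℕ) (x : X) (n : ℕ) :
    Semiconj₂ (Q.divIter k x) (Q.mulIter n) (Q.mulIter n) := by
  rw [divIter_eq_iterate]
  exact semiconj₂_mulIter ((semiconj₂_div_mul hd x).iterate k) n

end Distrib

end IRQ

theorem irq_distrib_sum_dif_iter_general {X : Type*} (Q : IRQ X)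
    (hd : ∀ x y z : X, Q.mul x (Q.mul y z) = Q.mul (Q.mul x y) (Q.mul x z))
    (k : ℕ) :
    (∀ x y z : X, Q.difIter k x y z = Q.mulIter k x (Q.divIter k y z)) ∧
    (∀ x y z : X, Q.sumIter k x y z = Q.mulIter k y (Q.divIter k x z)) ∧
    (∀ x y z : X, Q.sumIter k x y z = Q.difIter k y x z) := by
  have hdif : ∀ x y z : X, Q.difIter k x y z = Q.mulIter k x (Q.divIter k y z) :=
    fun x y z => ((IRQ.semiconj₂_mulIter_divIter hd k x k).eq y z).symm
  have hsum : ∀ x y z : X, Q.sumIter k x y z = Q.mulIter k y (Q.divIter k x z) := by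
    intro x y z
    rw [IRQ.sumIter, (IRQ.semiconj₂_divIter_mulIter hd k x k).eq, Q.divIter_mulIter]
  exact ⟨hdif, hsum, fun x y z => (hsum x y z).trans (hdif y x z).symm⟩

/-- In a distributive irq, for any `k ≥ 1`: `(xyz)_k = x *_k (y \_k z)`,
`)xyz(_k = y *_k (x \_k z)`, and consequently `)xyz(_k = (yxz)_k`. -/
theorem irq_distrib_sum_dif_iter {X : Type*} (Q : IRQ X)
    (hd : ∀ x y z : X, Q.mul x (Q.mul y z) = Q.mul (Q.mul x y) (Q.mul x z))
    (k : ℕ) (hk : 1 ≤ k) :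
    (∀ x y z : X, Q.difIter k x y z = Q.mulIter k x (Q.divIter k y z)) ∧
    (∀ x y z : X, Q.sumIter k x y z = Q.mulIter k y (Q.divIter k x z)) ∧
    (∀ x y z : X, Q.sumIter k x y z = Q.difIter k y x z) :=
  irq_distrib_sum_dif_iter_general Q hd k
end
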